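/- arXiv:2210.15580 — 2 statements merged into one kernel-verified Lean document; each statement's English description precedes it below -/
import Mathlib

section
/- Let p : [0,∞) → (0,∞) be measurable with p real-valued, and define the kernel k₀(t,s) = √(p(t))√(p(s)) e^{-t} e^{-s} I_0(2√(st)) on [0,∞)². If k₀ is square-integrable, then the integral operator Q on L²[0,∞) with kernel k₀ is a positive operator: ⟨Qf, f⟩ ≥ 0 for all f ∈ L²[0,∞). Consequently all eigenvalues of Q are nonnegative. -/
/-! Expanding `I₀` in its power series gives `k₀(t, s) = ∑ₘ aₘ(t) aₘ(s)` with
`aₘ(t) = √p(t) e^{-t} tᵐ / m! ≥ 0`. As the terms are nonnegative, Tonelli lets the sum be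
exchanged with the double integral whenever `f(t) f(s) k₀(t, s)` is integrable, so
`⟨Qf, f⟩ = ∑ₘ (∫ f aₘ)² ≥ 0`. For an eigenfunction, `⟨Qf, f⟩ = μ ‖f‖²` with `‖f‖² > 0`;
there `f(t) f(s) k₀(t, s)` is integrable by Hölder, since `k₀` and `f ⊗ f` are in `L²`. -/

open MeasureTheory
open scoped Nat

noncomputable def besselI0 (z : ℝ) : ℝ :=
  ∑' m : ℕ, (z / 2) ^ (2 * m) / (m ! * m !)

/-- The kernel k₀(t,s) = √p(t)√p(s) e^{-t} e^{-s} I₀(2√(st)). -/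
noncomputable def kernelK0 (p : ℝ → ℝ) (t s : ℝ) : ℝ :=
  Real.sqrt (p t) * Real.sqrt (p s) * Real.exp (-t) * Real.exp (-s) *
    besselI0 (2 * Real.sqrt (s * t))

namespace MeasureTheory

variable {α β : Type*} [MeasurableSpace α] [MeasurableSpace β] {μ : Measure α} {ν : Measure β}

lemma MemLp.mul_prod {f : α → ℝ} {g : β → ℝ} [SFinite ν] (hf : MemLp f 2 μ) (hg : MemLp g 2 ν) :
    MemLp (fun z : α × β => f z.1 * g z.2) 2 (μ.prod ν) := by
  refine (memLp_two_iff_integrable_sq (hf.1.comp_fst.mul hg.1.comp_snd)).2 ?_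
  simpa only [Pi.mul_apply, mul_pow] using hf.integrable_sq.mul_prod hg.integrable_sq

lemma integral_sq_pos_of_memLp_two {f : α → ℝ} (hf : MemLp f 2 μ) (hf0 : ¬f =ᵐ[μ] 0) :
    0 < ∫ x, f x ^ 2 ∂μ := by
  refine (integral_nonneg fun x => sq_nonneg (f x)).lt_of_ne' fun h => hf0 ?_
  filter_upwards [(integral_eq_zero_iff_of_nonneg (fun x => sq_nonneg (f x))
    hf.integrable_sq).1 h] with x hx
  exact (pow_eq_zero_iff two_ne_zero).1 hx

lemma integral_integral_mul_kernel_of_eigen {k : α → α → ℝ} {f : α → ℝ} {c : ℝ}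
    (heig : ∀ᵐ x ∂μ, ∫ y, f y * k x y ∂μ = c * f x) :
    ∫ x, ∫ y, f x * f y * k x y ∂μ ∂μ = c * ∫ x, f x ^ 2 ∂μ := by
  rw [← integral_const_mul]
  refine integral_congr_ae (heig.mono fun x hx => ?_)
  simp only [mul_assoc, integral_const_mul, hx]
  ring

variable [SFinite μ]

lemma integrable_mul_kernel_of_memLp_two {k : α → α → ℝ}
    (hk : MemLp (fun z : α × α => k z.1 z.2) 2 (μ.prod μ)) {f : α → ℝ} (hf : MemLp f 2 μ) :
    Integrable (fun z : α × α => f z.1 * f z.2 * k z.1 z.2) (μ.prod μ) :=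
  (hf.mul_prod hf).integrable_mul hk

theorem integral_integral_mul_kernel_nonneg_of_hasSum {a : ℕ → α → ℝ} {k : α → α → ℝ}
    (ha : ∀ m, AEStronglyMeasurable (a m) μ) (ha_nonneg : ∀ᵐ x ∂μ, ∀ m, 0 ≤ a m x)
    (hk : ∀ᵐ z ∂μ.prod μ, HasSum (fun m => a m z.1 * a m z.2) (k z.1 z.2))
    {f : α → ℝ} (hf : AEStronglyMeasurable f μ)
    (hfk : Integrable (fun z : α × α => f z.1 * f z.2 * k z.1 z.2) (μ.prod μ)) :
    0 ≤ ∫ x, ∫ y, f x * f y * k x y ∂μ ∂μ := by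
  set F : ℕ → α × α → ℝ := fun m z => (f z.1 * a m z.1) * (f z.2 * a m z.2)
  have hF_meas : ∀ m, AEStronglyMeasurable (F m) (μ.prod μ) := fun m =>
    (hf.mul (ha m)).comp_fst.mul (hf.mul (ha m)).comp_snd
  have hF_hasSum : ∀ᵐ z ∂μ.prod μ, HasSum (fun m => F m z) (f z.1 * f z.2 * k z.1 z.2) := by
    filter_upwards [hk] with z hz
    simpa only [F, mul_mul_mul_comm] using hz.mul_left (f z.1 * f z.2)
  have hF_norm_hasSum : ∀ᵐ z ∂μ.prod μ,
      HasSum (fun m => ‖F m z‖) ‖f z.1 * f z.2 * k z.1 z.2‖ := by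
    filter_upwards [hk, Measure.quasiMeasurePreserving_fst.ae ha_nonneg,
      Measure.quasiMeasurePreserving_snd.ae ha_nonneg] with z hz hx hy
    have hFm : ∀ m, ‖F m z‖ = ‖f z.1 * f z.2‖ * (a m z.1 * a m z.2) := fun m => by
      rw [show F m z = f z.1 * f z.2 * (a m z.1 * a m z.2) from mul_mul_mul_comm ..,
        norm_mul, Real.norm_of_nonneg (mul_nonneg (hx m) (hy m))]
    rw [funext hFm, norm_mul (f z.1 * f z.2),
      Real.norm_of_nonneg (hz.nonneg fun m => mul_nonneg (hx m) (hy m))]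
    exact hz.mul_left _
  -- Tonelli applies because the expansion has nonnegative terms.
  have hF_lintegral : ∑' m, ∫⁻ z, ‖F m z‖ₑ ∂μ.prod μ ≠ ⊤ := by
    rw [← lintegral_tsum fun m => (hF_meas m).enorm]
    refine ne_of_eq_of_ne (lintegral_congr_ae (hF_norm_hasSum.mono fun z hz => ?_)) hfk.2.ne
    simp only [← ofReal_norm]
    rw [← ENNReal.ofReal_tsum_of_nonneg (fun m => norm_nonneg _) hz.summable, hz.tsum_eq]
  calc 0 ≤ ∑' m, (∫ x, f x * a m x ∂μ) ^ 2 := tsum_nonneg fun m => sq_nonneg _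
    _ = ∑' m, ∫ z, F m z ∂μ.prod μ := by
      congr 1
      ext m
      rw [sq]
      exact (integral_prod_mul (fun x => f x * a m x) (fun x => f x * a m x)).symm
    _ = ∫ z, ∑' m, F m z ∂μ.prod μ := (integral_tsum hF_meas hF_lintegral).symm
    _ = ∫ z, f z.1 * f z.2 * k z.1 z.2 ∂μ.prod μ :=
      integral_congr_ae (hF_hasSum.mono fun z hz => hz.tsum_eq)
    _ = ∫ x, ∫ y, f x * f y * k x y ∂μ ∂μ :=
      (integral_integral (f := fun x y => f x * f y * k x y) hfk).symm

end MeasureTheory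

lemma summable_besselI0_series (z : ℝ) :
    Summable fun m : ℕ => (z / 2) ^ (2 * m) / (m ! * m !) := by
  simp_rw [pow_mul]
  refine .of_nonneg_of_le (fun m => by positivity) (fun m => ?_)
    (Real.summable_pow_div_factorial ((z / 2) ^ 2))
  exact div_le_div_of_nonneg_left (by positivity) (by positivity)
    (le_mul_of_one_le_right (by positivity) (by exact_mod_cast m.factorial_pos))

noncomputable def kernelK0Factor (p : ℝ → ℝ) (m : ℕ) (t : ℝ) : ℝ :=
  Real.sqrt (p t) * Real.exp (-t) * t ^ m / m !

lemma kernelK0Factor_nonneg (p : ℝ → ℝ) (m : ℕ) {t : ℝ} (ht : 0 ≤ t) :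
    0 ≤ kernelK0Factor p m t := by
  unfold kernelK0Factor
  positivity

lemma measurable_kernelK0Factor {p : ℝ → ℝ} (hp : Measurable p) (m : ℕ) :
    Measurable (kernelK0Factor p m) := by
  unfold kernelK0Factor
  fun_prop

lemma hasSum_kernelK0 (p : ℝ → ℝ) {t s : ℝ} (ht : 0 ≤ t) (hs : 0 ≤ s) :
    HasSum (fun m => kernelK0Factor p m t * kernelK0Factor p m s) (kernelK0 p t s) := by
  have h_term : ∀ m : ℕ, kernelK0Factor p m t * kernelK0Factor p m s =
      Real.sqrt (p t) * Real.sqrt (p s) * Real.exp (-t) * Real.exp (-s) *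
        ((2 * Real.sqrt (s * t) / 2) ^ (2 * m) / (m ! * m !)) := fun m => by
    rw [mul_div_cancel_left₀ _ two_ne_zero, pow_mul, Real.sq_sqrt (mul_nonneg hs ht)]
    unfold kernelK0Factor
    field_simp
    ring
  simp_rw [h_term]
  exact (summable_besselI0_series _).hasSum.mul_left _

theorem kernelK0_pos_operator_general
    (p : ℝ → ℝ) (hp_meas : Measurable p)
    (hk_sq : MemLp (fun ts : ℝ × ℝ => kernelK0 p ts.1 ts.2) 2
      ((volume.restrict (Set.Ici (0 : ℝ))).prod (volume.restrict (Set.Ici (0 : ℝ))))) :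
    (∀ f : ℝ → ℝ, MemLp f 2 (volume.restrict (Set.Ici (0 : ℝ))) →
      Integrable (fun ts : ℝ × ℝ => f ts.1 * f ts.2 * kernelK0 p ts.1 ts.2)
        ((volume.restrict (Set.Ici (0 : ℝ))).prod (volume.restrict (Set.Ici (0 : ℝ)))) →
      0 ≤ ∫ t in Set.Ici (0 : ℝ), ∫ s in Set.Ici (0 : ℝ), f t * f s * kernelK0 p t s) ∧
    (∀ (μ : ℝ) (f : ℝ → ℝ), MemLp f 2 (volume.restrict (Set.Ici (0 : ℝ))) →
      ¬ (f =ᵐ[volume.restrict (Set.Ici (0 : ℝ))] 0) →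
      (∀ᵐ t ∂(volume.restrict (Set.Ici (0 : ℝ))),
        (∫ s in Set.Ici (0 : ℝ), f s * kernelK0 p t s) = μ * f t) →
      0 ≤ μ) := by
  have h_mem : ∀ᵐ t ∂volume.restrict (Set.Ici (0 : ℝ)), 0 ≤ t :=
    ae_restrict_mem measurableSet_Ici
  have h_expansion : ∀ᵐ ts ∂(volume.restrict (Set.Ici (0 : ℝ))).prod
      (volume.restrict (Set.Ici (0 : ℝ))),
      HasSum (fun m => kernelK0Factor p m ts.1 * kernelK0Factor p m ts.2)
        (kernelK0 p ts.1 ts.2) := by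
    filter_upwards [Measure.quasiMeasurePreserving_fst.ae h_mem,
      Measure.quasiMeasurePreserving_snd.ae h_mem] with ts ht hs
    exact hasSum_kernelK0 p ht hs
  have h_pos := fun (f : ℝ → ℝ) (hf : MemLp f 2 (volume.restrict (Set.Ici (0 : ℝ)))) =>
    integral_integral_mul_kernel_nonneg_of_hasSum
      (fun m => (measurable_kernelK0Factor hp_meas m).aestronglyMeasurable)
      (h_mem.mono fun t ht m => kernelK0Factor_nonneg p m ht) h_expansion hf.1
  refine ⟨h_pos, fun c f hf hf0 heig => ?_⟩
  have hQf := h_pos f hf (integrable_mul_kernel_of_memLp_two hk_sq hf)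
  rw [integral_integral_mul_kernel_of_eigen heig] at hQf
  exact nonneg_of_mul_nonneg_left hQf (integral_sq_pos_of_memLp_two hf hf0)

/-- Positivity of the integral operator with kernel k₀, and nonnegativity of its
eigenvalues. -/
theorem kernelK0_pos_operator
    (p : ℝ → ℝ) (hp_meas : Measurable p) (hp_pos : ∀ t ∈ Set.Ici (0 : ℝ), 0 < p t)
    (hk_sq : MemLp (fun ts : ℝ × ℝ => kernelK0 p ts.1 ts.2) 2
      ((volume.restrict (Set.Ici (0 : ℝ))).prod (volume.restrict (Set.Ici (0 : ℝ))))) :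
    (∀ f : ℝ → ℝ, MemLp f 2 (volume.restrict (Set.Ici (0 : ℝ))) →
      Integrable (fun ts : ℝ × ℝ => f ts.1 * f ts.2 * kernelK0 p ts.1 ts.2)
        ((volume.restrict (Set.Ici (0 : ℝ))).prod (volume.restrict (Set.Ici (0 : ℝ)))) →
      0 ≤ ∫ t in Set.Ici (0 : ℝ), ∫ s in Set.Ici (0 : ℝ), f t * f s * kernelK0 p t s) ∧
    (∀ (μ : ℝ) (f : ℝ → ℝ), MemLp f 2 (volume.restrict (Set.Ici (0 : ℝ))) →
      ¬ (f =ᵐ[volume.restrict (Set.Ici (0 : ℝ))] 0) →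
      (∀ᵐ t ∂(volume.restrict (Set.Ici (0 : ℝ))),
        (∫ s in Set.Ici (0 : ℝ), f s * kernelK0 p t s) = μ * f t) →
      0 ≤ μ) :=
  kernelK0_pos_operator_general p hp_meas hk_sq
end

section
/- Let Q_c be a compact self-adjoint positive integral operator on L²[0,∞) with ‖Q_c‖ = 1 and kernel k_c(t,s) ≥ 0. For y ≠ 0 define the multiplication operator U f(t) = e^{-iyt/2} f(t) and Q = U Q_c U. Then 1 is not an eigenvalue of Q; hence, since Q is compact, 1 is not in the spectrum of Q. -/
/-! If `Q f = f` for `Q = U Q_c U`, then `‖Q_c (U f)‖ = ‖f‖ = ‖U f‖` because `U` is unitary.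
A positive contraction `P` satisfies `‖P x‖² ≤ re ⟪P x, x⟫`, hence `‖P x - x‖² ≤ ‖x‖² - ‖P x‖²`,
so `Q_c` fixes `U f`. Then `f = U (U f)` is `f` multiplied by `e^{-iyt}`, which differs from `1`
almost everywhere when `y ≠ 0`, so `f = 0`. Since `Q` is compact, the Fredholm alternative turns
"1 is not an eigenvalue" into "1 is not in the spectrum". -/

open MeasureTheory
open scoped ComplexInnerProductSpace

namespace ContinuousLinearMap

open scoped InnerProductSpace

variable {𝕜 E : Type*} [RCLike 𝕜] [NormedAddCommGroup E] [InnerProductSpace 𝕜 E]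
  {T : E →L[𝕜] E}

open RCLike in
theorem IsPositive.norm_apply_sq_le_re_inner (hT : T.IsPositive) (hT1 : ‖T‖ ≤ 1) (x : E) :
    ‖T x‖ ^ 2 ≤ re ⟪T x, x⟫_𝕜 := by
  have hsymm : ⟪T (T x), x⟫_𝕜 = ⟪T x, T x⟫_𝕜 := hT.isSymmetric (T x) x
  have hTTx : re ⟪T (T x), T x⟫_𝕜 ≤ ‖T x‖ ^ 2 :=
    calc re ⟪T (T x), T x⟫_𝕜 ≤ ‖T (T x)‖ * ‖T x‖ := re_inner_le_norm _ _
      _ ≤ ‖T x‖ * ‖T x‖ := by gcongr; simpa using T.le_of_opNorm_le hT1 (T x)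
      _ = ‖T x‖ ^ 2 := (sq _).symm
  have hnonneg := hT.re_inner_nonneg_left (x - T x)
  simp only [map_sub, inner_sub_left, inner_sub_right, hsymm,
    inner_self_eq_norm_sq] at hnonneg
  linarith

theorem IsPositive.apply_eq_self_of_norm_apply_eq (hT : T.IsPositive) (hT1 : ‖T‖ ≤ 1) {x : E}
    (hx : ‖T x‖ = ‖x‖) : T x = x := by
  have h := hT.norm_apply_sq_le_re_inner hT1 x
  have hsq : ‖T x - x‖ ^ 2 ≤ 0 := by
    rw [norm_sub_sq (𝕜 := 𝕜), hx]
    rw [hx] at h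
    linarith
  rw [← sub_eq_zero, ← norm_eq_zero, ← sq_eq_zero_iff]
  exact hsq.antisymm (sq_nonneg _)

end ContinuousLinearMap

namespace MeasureTheory.Lp

variable {α 𝕜 : Type*} [MeasurableSpace α] {μ : Measure α} [NormedDivisionRing 𝕜]
  {p : ENNReal} {φ : α → 𝕜}

theorem norm_eq_of_ae_eq_mul {f g : Lp 𝕜 p μ} (hg : g =ᵐ[μ] fun t => φ t * f t)
    (hφ : ∀ᵐ t ∂μ, ‖φ t‖ = 1) : ‖g‖ = ‖f‖ := by
  rw [Lp.norm_def, Lp.norm_def, eLpNorm_congr_norm_ae (f := g) (g := f)]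
  filter_upwards [hg, hφ] with t hgt hφt
  rw [hgt, norm_mul, hφt, one_mul]

theorem eq_zero_of_ae_eq_mul {f : Lp 𝕜 p μ} (hf : f =ᵐ[μ] fun t => φ t * f t)
    (hφ : ∀ᵐ t ∂μ, φ t ≠ 1) : f = 0 := by
  rw [Lp.eq_zero_iff_ae_eq_zero]
  filter_upwards [hf, hφ] with t hft hφt
  have : (1 - φ t) * f t = 0 := by rw [sub_mul, one_mul, ← hft, sub_self]
  exact (mul_eq_zero.mp this).resolve_left (sub_ne_zero.mpr hφt.symm)

end MeasureTheory.Lp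

theorem Complex.ae_exp_mul_I_ne_one {y : ℝ} (hy : y ≠ 0) :
    ∀ᵐ t : ℝ, Complex.exp (y * t * Complex.I) ≠ 1 := by
  have hsub : {t : ℝ | Complex.exp (y * t * Complex.I) = 1} ⊆
      Set.range fun n : ℤ => 2 * Real.pi * n / y := by
    intro t ht
    obtain ⟨n, hn⟩ := Complex.exp_eq_one_iff.mp ht
    have hreal : y * t = 2 * Real.pi * n := by
      apply Complex.ofReal_injective
      push_cast
      linear_combination (-Complex.I) * hn + (y * t - 2 * Real.pi * n) * Complex.I_sq
    exact ⟨n, by field_simp; linarith⟩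
  exact measure_mono_null (fun t ht => hsub (not_not.mp ht))
    ((Set.countable_range _).measure_zero _)

/-- Let `Q_c` be a compact self-adjoint positive operator on `L²[0,∞)` with `‖Q_c‖ = 1`,
and for `y ≠ 0` let `U` be the unitary multiplication operator by `e^{-iyt/2}`. Then
`Q = U Q_c U` does not have 1 as an eigenvalue, and 1 is not in the spectrum of `Q`. -/
theorem one_not_in_spectrum_twisted
    (Qc : Lp ℂ 2 (volume.restrict (Set.Ici (0 : ℝ))) →L[ℂ]
      Lp ℂ 2 (volume.restrict (Set.Ici (0 : ℝ))))
    (hcompact : IsCompactOperator Qc)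
    (hsa : IsSelfAdjoint Qc)
    (hpos : ∀ f, 0 ≤ (⟪Qc f, f⟫).re)
    (hnorm : ‖Qc‖ = 1)
    (y : ℝ) (hy : y ≠ 0)
    (U : Lp ℂ 2 (volume.restrict (Set.Ici (0 : ℝ))) →L[ℂ]
      Lp ℂ 2 (volume.restrict (Set.Ici (0 : ℝ))))
    (hU : ∀ f, (U f : ℝ → ℂ) =ᵐ[volume.restrict (Set.Ici (0 : ℝ))]
      fun t => Complex.exp (-Complex.I * y * t / 2) * f t) :
    (∀ f, (U.comp (Qc.comp U)) f = f → f = 0) ∧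
    (1 : ℂ) ∉ spectrum ℂ (U.comp (Qc.comp U)) := by
  have hU_norm (f) : ‖U f‖ = ‖f‖ :=
    Lp.norm_eq_of_ae_eq_mul (hU f) (ae_of_all _ fun t => by simp [Complex.norm_exp])
  have hQc : Qc.IsPositive := ⟨hsa.isSymmetric, hpos⟩
  have no_fixed_point (f) (hf : U (Qc (U f)) = f) : f = 0 := by
    have hfix : Qc (U f) = U f :=
      hQc.apply_eq_self_of_norm_apply_eq hnorm.le (by rw [← hU_norm, hf, hU_norm])
    rw [hfix] at hf
    have hφ : ∀ᵐ (t : ℝ) ∂volume.restrict (Set.Ici (0 : ℝ)),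
        Complex.exp (↑(-y) * t * Complex.I) ≠ 1 :=
      ae_restrict_of_ae (Complex.ae_exp_mul_I_ne_one (neg_ne_zero.mpr hy))
    refine Lp.eq_zero_of_ae_eq_mul ?_ hφ
    filter_upwards [hU (U f), hU f] with t hUUf hUf
    conv_lhs => rw [← hf, hUUf, hUf, ← mul_assoc, ← Complex.exp_add]
    congr 2
    push_cast
    ring
  refine ⟨no_fixed_point, fun h1 => ?_⟩
  have hQ : IsCompactOperator (U.comp (Qc.comp U)) := (hcompact.comp_clm U).clm_comp U
  obtain ⟨f, hf⟩ :=
    ((hQ.hasEigenvalue_iff_mem_spectrum one_ne_zero).mpr h1).exists_hasEigenvector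
  exact hf.2 (no_fixed_point f (by simpa using hf.apply_eq_smul))
end
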